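/- Let V be a finite type and E : V → V → Prop a relation with no directed cycles (¬ Relation.TransGen E v v for every v) that is transitive (E x y and E y z imply E x z). Then E is reduced if and only if E is strongly reduced. -/

import Mathlib

/-- A directed path of length `k` in `(V, E)`: a map `p : Fin (k+1) → V` with
`E (p i) (p (i+1))` for all `i < k`. -/
def IsDirPath {V : Type*} (E : V → V → Prop) (k : ℕ) (p : Fin (k + 1) → V) : Prop :=
  ∀ i : Fin k, E (p i.castSucc) (p i.succ)

/-- A directed path of length `k` from `v` to `w`. -/
def IsDirPathFromTo {V : Type*} (E : V → V → Prop) (k : ℕ) (p : Fin (k + 1) → V)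
    (v w : V) : Prop :=
  p 0 = v ∧ p (Fin.last k) = w ∧ IsDirPath E k p

/-- `E` is reduced: for every pair of vertices `v, w` with `w` reachable from `v`, there is
a directed path from `v` to `w` whose vertex set contains the vertex set of every directed
path from `v` to `w`. -/
def Reduced {V : Type*} (E : V → V → Prop) : Prop :=
  ∀ v w : V, Relation.TransGen E v w →
    ∃ (m : ℕ) (γM : Fin (m + 1) → V), IsDirPathFromTo E m γM v w ∧
      ∀ (k : ℕ) (γ : Fin (k + 1) → V), IsDirPathFromTo E k γ v w →
        Set.range γ ⊆ Set.range γM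

/-- A topological order of `(V, E)`: an injective map `f : V → ℕ` with `f u < f v`
whenever `E u v`. -/
def IsTopologicalOrder {V : Type*} (E : V → V → Prop) (f : V → ℕ) : Prop :=
  Function.Injective f ∧ ∀ u v : V, E u v → f u < f v

/-- `L` is the list of the elements of `S`, sorted in strictly increasing order of `f`. -/
def IsSortedListOf {V : Type*} (f : V → ℕ) (S : Set V) (L : List V) : Prop :=
  (∀ x : V, x ∈ L ↔ x ∈ S) ∧ L.Pairwise fun x y => f x < f y

/-- The list `L` is a directed path from `v` to `w`: its first element is `v`, its last
element is `w`, and consecutive elements are related by `E`. -/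
def IsDirPathList {V : Type*} (E : V → V → Prop) (v w : V) (L : List V) : Prop :=
  L.head? = some v ∧ L.getLast? = some w ∧ L.Chain' E

/-- `E` is strongly reduced: for every topological order `f`, every pair of vertices `v, w`
and every two directed paths `γ, γ'` from `v` to `w`, the list of vertices of the union of
the vertex sets of `γ` and `γ'`, sorted in strictly increasing order of `f`, is a directed
path from `v` to `w`. -/
def StronglyReduced {V : Type*} (E : V → V → Prop) : Prop :=
  ∀ f : V → ℕ, IsTopologicalOrder E f →
    ∀ (v w : V) (k k' : ℕ) (γ : Fin (k + 1) → V) (γ' : Fin (k' + 1) → V),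
      IsDirPathFromTo E k γ v w → IsDirPathFromTo E k' γ' v w →
        ∀ L : List V, IsSortedListOf f (Set.range γ ∪ Set.range γ') L →
          IsDirPathList E v w L

/-!
In a transitive DAG the vertices of a directed path are pairwise comparable, and conversely a
set `S` of vertices that is an `E`-chain, lies between `v` and `w` in the reflexive closure
of `E` and contains both, sorted along any topological order, is a directed path from `v`
to `w`. If `E` is reduced, the union of two paths from `v` to `w` lies on the maximal path, so
it is a chain. If `E` is strongly reduced, the union of the vertex sets of all paths from `v`
to `w` is a chain, because any two of its vertices lie on the sorted union of two paths, which
is a path; sorting this union yields the maximal path.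
-/

section

variable {V : Type*} {E : V → V → Prop}

theorem List.Pairwise.head?_eq_some {α : Type*} {R : α → α → Prop} {L : List α} {a : α}
    (hL : L.Pairwise R) (ha : a ∈ L) (hmin : ∀ x ∈ L, ¬R x a) : L.head? = some a := by
  cases L with
  | nil => simp at ha
  | cons b t =>
    obtain rfl | hat := List.mem_cons.mp ha
    · rfl
    · exact absurd ((List.pairwise_cons.mp hL).1 a hat) (hmin b List.mem_cons_self)

theorem List.Pairwise.getLast?_eq_some {α : Type*} {R : α → α → Prop} {L : List α} {a : α}
    (hL : L.Pairwise R) (ha : a ∈ L) (hmax : ∀ x ∈ L, ¬R a x) : L.getLast? = some a := by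
  rw [← List.head?_reverse]
  exact (List.pairwise_reverse.mpr hL).head?_eq_some (List.mem_reverse.mpr ha)
    fun x hx => hmax x (List.mem_reverse.mp hx)

theorem List.Pairwise.isChain_setOf_mem {α : Type*} {R : α → α → Prop} {L : List α}
    (hL : L.Pairwise R) : _root_.IsChain R {x | x ∈ L} := by
  have hsymm : Std.Symm fun a b => R a b ∨ R b a := ⟨fun _ _ => Or.symm⟩
  exact fun x hx y hy hxy => @List.Pairwise.forall _ _ _ hsymm (hL.imp Or.inl) x hx y hy hxy

open Finset in
theorem exists_isTopologicalOrder [Fintype V] (hacyc : ∀ v, ¬Relation.TransGen E v v) :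
    ∃ f : V → ℕ, IsTopologicalOrder E f := by
  classical
  let height (x : V) : ℕ := #{u | Relation.TransGen E u x}
  have height_lt (x y : V) (hxy : E x y) : height x < height y := by
    refine Finset.card_lt_card (Finset.ssubset_iff_of_subset ?_ |>.mpr ⟨x, ?_, ?_⟩)
    · intro u; simpa using fun hux => hux.tail hxy
    · simpa using Relation.TransGen.single hxy
    · simpa using hacyc x
  let n := Fintype.card V
  let e := Fintype.equivFin V
  refine ⟨fun x => height x * n + e x, fun x y hxy => ?_, fun x y hxy => ?_⟩
  · have hmod : (height x * n + e x) % n = (height y * n + e y) % n := congrArg (· % n) hxy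
    rw [Nat.mul_add_mod_of_lt (e x).isLt, Nat.mul_add_mod_of_lt (e y).isLt] at hmod
    exact e.injective (Fin.ext hmod)
  · calc height x * n + e x < (height x + 1) * n := by nlinarith [(e x).isLt]
      _ ≤ height y * n + e y := by nlinarith [height_lt x y hxy]

theorem exists_isSortedListOf {f : V → ℕ} (hf : Function.Injective f) {S : Set V}
    (hS : S.Finite) : ∃ L : List V, IsSortedListOf f S L := by
  let _ : LinearOrder V := LinearOrder.lift' f hf
  exact ⟨hS.toFinset.sort, fun x => by simp, List.sortedLT_iff_pairwise.mp (Finset.sortedLT_sort _)⟩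

theorem IsDirPath.rel_of_lt [IsTrans V E] {k : ℕ} {p : Fin (k + 1) → V} (hp : IsDirPath E k p)
    {i j : Fin (k + 1)} (hij : i < j) : E (p i) (p j) := by
  induction j using Fin.induction with
  | zero => exact absurd hij (Fin.not_lt_zero i)
  | succ j ih =>
    obtain hij | rfl := (Fin.le_castSucc_iff.mpr hij).lt_or_eq
    · exact _root_.trans (ih hij) (hp j)
    · exact hp j

theorem IsDirPath.isChain_range [IsTrans V E] {k : ℕ} {p : Fin (k + 1) → V}
    (hp : IsDirPath E k p) : IsChain E (Set.range p) := by
  rintro _ ⟨i, rfl⟩ _ ⟨j, rfl⟩ hne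
  obtain hij | rfl | hji := lt_trichotomy i j
  exacts [Or.inl (hp.rel_of_lt hij), absurd rfl hne, Or.inr (hp.rel_of_lt hji)]

theorem IsDirPathFromTo.range_subset [IsTrans V E] {k : ℕ} {p : Fin (k + 1) → V} {v w : V}
    (hp : IsDirPathFromTo E k p v w) :
    Set.range p ⊆ {x | Relation.ReflGen E v x ∧ Relation.ReflGen E x w} := by
  obtain ⟨rfl, rfl, hp⟩ := hp
  rintro _ ⟨i, rfl⟩
  constructor
  · obtain h | h := (Fin.zero_le i).eq_or_lt
    exacts [h ▸ .refl, .single (hp.rel_of_lt h)]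
  · obtain h | h := (Fin.le_last i).lt_or_eq
    exacts [.single (hp.rel_of_lt h), h ▸ .refl]

theorem Relation.ReflGen.antisymm [IsTrans V E] [Std.Irrefl E] {x y : V}
    (hxy : ReflGen E x y) (hyx : ReflGen E y x) : x = y := by
  cases hxy with
  | refl => rfl
  | single hxy =>
    cases hyx with
    | refl => rfl
    | single hyx => exact absurd (_root_.trans hxy hyx) (irrefl x)

theorem IsSortedListOf.isDirPathList {f : V → ℕ} (hf : ∀ x y, E x y → f x < f y) {S : Set V}
    {L : List V} (hL : IsSortedListOf f S L) (hS : IsChain E S) {v w : V}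
    (hSvw : S ⊆ {x | Relation.ReflGen E v x ∧ Relation.ReflGen E x w}) (hv : v ∈ S)
    (hw : w ∈ S) : IsDirPathList E v w L := by
  obtain ⟨hmem, hsorted⟩ := hL
  refine ⟨hsorted.head?_eq_some ((hmem v).2 hv) fun x hx hxv => ?_,
    hsorted.getLast?_eq_some ((hmem w).2 hw) fun x hx hwx => ?_,
    List.Pairwise.isChain (hsorted.imp_of_mem fun {x y} hx hy hxy => ?_)⟩
  · cases (hSvw ((hmem x).1 hx)).1 with
    | refl => exact lt_irrefl _ hxv
    | single hvx => exact (hf v x hvx).not_gt hxv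
  · cases (hSvw ((hmem x).1 hx)).2 with
    | refl => exact lt_irrefl _ hwx
    | single hxw => exact (hf x w hxw).not_gt hwx
  · refine (hS ((hmem x).1 hx) ((hmem y).1 hy) (fun h => (h ▸ hxy).false)).resolve_right ?_
    exact fun hyx => (hf y x hyx).not_gt hxy

theorem IsDirPathList.exists_isDirPathFromTo {v w : V} {L : List V}
    (hL : IsDirPathList E v w L) :
    ∃ (m : ℕ) (γ : Fin (m + 1) → V), IsDirPathFromTo E m γ v w ∧ Set.range γ = {x | x ∈ L} := by
  obtain ⟨hhead, hlast, hchain⟩ := hL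
  cases L with
  | nil => simp at hhead
  | cons a t =>
    refine ⟨t.length, (a :: t).get, ⟨by simpa using hhead, ?_, fun i => ?_⟩, ?_⟩
    · simpa [List.getLast?_eq_getElem?] using hlast
    · exact List.isChain_iff_getElem.mp hchain i (by simp)
    · ext x; simp [List.mem_iff_get]

def pathVertices (E : V → V → Prop) (v w : V) : Set V :=
  {x | ∃ (k : ℕ) (γ : Fin (k + 1) → V), IsDirPathFromTo E k γ v w ∧ x ∈ Set.range γ}

theorem StronglyReduced.isChain_pathVertices [IsTrans V E] (hsr : StronglyReduced E)
    {f : V → ℕ} (hf : IsTopologicalOrder E f) (v w : V) : IsChain E (pathVertices E v w) := by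
  rintro x ⟨k, γ, hγ, hx⟩ y ⟨k', γ', hγ', hy⟩ hxy
  obtain ⟨L, hL⟩ := exists_isSortedListOf hf.1 ((Set.finite_range γ).union (Set.finite_range γ'))
  have hLpath := hsr f hf v w k k' γ γ' hγ hγ' L hL
  exact (List.isChain_iff_pairwise.mp hLpath.2.2).isChain_setOf_mem
    ((hL.1 x).2 (.inl hx)) ((hL.1 y).2 (.inr hy)) hxy

end

theorem transitive_reduced_iff_stronglyReduced {V : Type*} [Fintype V] (E : V → V → Prop)
    (hacyc : ∀ v : V, ¬Relation.TransGen E v v)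
    (htrans : ∀ x y z : V, E x y → E y z → E x z) :
    Reduced E ↔ StronglyReduced E := by
  have : IsTrans V E := ⟨htrans⟩
  have : Std.Irrefl E := ⟨fun v hv => hacyc v (.single hv)⟩
  constructor
  · intro hred f hf v w k k' γ γ' hγ hγ' L hL
    have hS := Set.union_subset hγ.range_subset hγ'.range_subset
    refine hL.isDirPathList hf.2 ?_ hS (.inl ⟨0, hγ.1⟩) (.inl ⟨_, hγ.2.1⟩)
    cases (hγ.range_subset ⟨_, hγ.2.1⟩).1 with
    | refl => exact Set.Subsingleton.isChain fun x hx y hy =>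
        ((hS hx).1.antisymm (hS hx).2).symm.trans ((hS hy).1.antisymm (hS hy).2)
    | single hvw =>
      obtain ⟨m, γM, hγM, hmax⟩ := hred v w (.single hvw)
      exact hγM.2.2.isChain_range.mono (Set.union_subset (hmax k γ hγ) (hmax k' γ' hγ'))
  · intro hsr v w hvw
    rw [Relation.transGen_eq_self] at hvw
    obtain ⟨f, hf⟩ := exists_isTopologicalOrder hacyc
    have hS : pathVertices E v w ⊆ {x | Relation.ReflGen E v x ∧ Relation.ReflGen E x w} :=
      fun x ⟨k, γ, hγ, hx⟩ => hγ.range_subset hx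
    have hedge : IsDirPathFromTo E 1 ![v, w] v w :=
      ⟨rfl, rfl, fun i => by simpa [Fin.fin_one_eq_zero i] using hvw⟩
    obtain ⟨L, hL⟩ := exists_isSortedListOf hf.1 (pathVertices E v w).toFinite
    obtain ⟨m, γM, hγM, hrange⟩ := (hL.isDirPathList hf.2 (hsr.isChain_pathVertices hf v w) hS
      ⟨1, _, hedge, 0, rfl⟩ ⟨1, _, hedge, 1, rfl⟩).exists_isDirPathFromTo
    refine ⟨m, γM, hγM, fun k γ hγ x hx => ?_⟩
    rw [hrange]
    exact (hL.1 x).2 ⟨k, γ, hγ, hx⟩
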